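/- Let a : ℕ → ℝ be a nonnegative bounded sequence and let (k_i) be a strictly increasing sequence of positive integers with k_{i+1}/k_i → 1. Then the Cesàro means along the full sequence and along the subsequence agree asymptotically: (1/(n+1)) ∑_{k=0}^n a_k − (1/(k_{i_n}+1)) ∑_{k=0}^{k_{i_n}} a_k → 0, where k_{i_n} = min{k_i : k_i ≥ n}. -/

import Mathlib

/-!
Let `M = k_{i_n}` be the first `k_i ≥ n`. The Cesàro mean at `M` is the mean at `n` rescaled by
`(n + 1) / (M + 1)` plus the terms `a_{n+1}, …, a_M` divided by `M + 1`; for `0 ≤ a ≤ K` both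
corrections lie in `[0, K (M - n) / (M + 1)]`, so the two means differ by at most `K (M / n - 1)`.
Since `k_{i_n - 1} < n ≤ k_{i_n}`, the ratio `M / n` is squeezed between `1` and
`k_{i_n} / k_{i_n - 1} → 1`.
-/

open Filter Finset Topology

noncomputable def cesaroMean (a : ℕ → ℝ) (n : ℕ) : ℝ :=
  ((n : ℝ) + 1)⁻¹ * ∑ k ∈ range (n + 1), a k

section CesaroMean

variable {a : ℕ → ℝ} {K : ℝ}

theorem cesaroMean_nonneg (ha0 : ∀ n, 0 ≤ a n) (n : ℕ) : 0 ≤ cesaroMean a n :=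
  mul_nonneg (by positivity) (sum_nonneg fun k _ => ha0 k)

theorem cesaroMean_le (hK : ∀ n, a n ≤ K) (n : ℕ) : cesaroMean a n ≤ K := by
  have hsum : ∑ k ∈ range (n + 1), a k ≤ (n + 1) * K := by
    simpa using sum_le_card_nsmul (range (n + 1)) a K fun k _ => hK k
  rw [cesaroMean, inv_mul_le_iff₀ (by positivity)]
  exact hsum

theorem cesaroMean_eq_mul_add_div {n M : ℕ} (hnM : n ≤ M) :
    cesaroMean a M =
      cesaroMean a n * ((n + 1) / (M + 1)) + (∑ k ∈ Ico (n + 1) (M + 1), a k) / (M + 1) := by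
  rw [cesaroMean, cesaroMean, ← sum_range_add_sum_Ico _ (by omega : n + 1 ≤ M + 1)]
  field_simp

theorem abs_cesaroMean_sub_le (ha0 : ∀ n, 0 ≤ a n) (hK : ∀ n, a n ≤ K) {n M : ℕ}
    (hnM : n ≤ M) :
    |cesaroMean a n - cesaroMean a M| ≤ K * (M - n) / (M + 1) := by
  set T := ∑ k ∈ Ico (n + 1) (M + 1), a k
  have hMn : (0 : ℝ) ≤ M - n := sub_nonneg.mpr (by exact_mod_cast hnM)
  have hT : T ≤ K * (M - n) := by
    calc T ≤ #(Ico (n + 1) (M + 1)) • K := sum_le_card_nsmul _ _ _ fun k _ => hK k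
      _ = K * (M - n) := by simp [Nat.cast_sub hnM, mul_comm]
  have hdiff : cesaroMean a n - cesaroMean a M =
      cesaroMean a n * ((M - n) / (M + 1)) - T / (M + 1) := by
    rw [cesaroMean_eq_mul_add_div hnM]
    field_simp
    ring
  rw [hdiff, mul_div_assoc]
  apply abs_sub_le_of_nonneg_of_le
  · exact mul_nonneg (cesaroMean_nonneg ha0 n) (by positivity)
  · exact mul_le_mul_of_nonneg_right (cesaroMean_le hK n) (by positivity)
  · exact div_nonneg (sum_nonneg fun k _ => ha0 k) (by positivity)
  · rw [← mul_div_assoc]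
    exact div_le_div_of_nonneg_right hT (by positivity)

end CesaroMean

section SubsequenceCeiling

variable {ks : ℕ → ℕ}

theorem le_apply_sInf_setOf_le (hks : StrictMono ks) (n : ℕ) : n ≤ ks (sInf {i | n ≤ ks i}) :=
  Nat.sInf_mem (s := {i | n ≤ ks i}) ⟨n, hks.le_apply⟩

theorem apply_sInf_setOf_le_sub_one_lt {n : ℕ} (h : 0 < sInf {i | n ≤ ks i}) :
    ks (sInf {i | n ≤ ks i} - 1) < n :=
  not_le.mp (Nat.notMem_of_lt_sInf (s := {i | n ≤ ks i}) (Nat.sub_lt h one_pos))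

theorem tendsto_sInf_setOf_le_apply_atTop (hks : StrictMono ks) :
    Tendsto (fun n => sInf {i | n ≤ ks i}) atTop atTop :=
  tendsto_atTop_atTop.2 fun J => ⟨ks J + 1, fun n hn =>
    (hks.lt_iff_lt.1 (by have := le_apply_sInf_setOf_le hks n; omega)).le⟩

theorem tendsto_apply_sInf_setOf_le_div_self (hks : StrictMono ks)
    (hratio : Tendsto (fun i => (ks (i + 1) : ℝ) / ks i) atTop (𝓝 1)) :
    Tendsto (fun n : ℕ => (ks (sInf {i | n ≤ ks i}) : ℝ) / n) atTop (𝓝 1) := by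
  have hidx := tendsto_sInf_setOf_le_apply_atTop hks
  refine tendsto_of_tendsto_of_tendsto_of_le_of_le' tendsto_const_nhds
    (hratio.comp ((tendsto_sub_atTop_nat 1).comp hidx)) ?_ ?_
  · filter_upwards [eventually_gt_atTop 0] with n hn
    rw [one_le_div (by exact_mod_cast hn)]
    exact_mod_cast le_apply_sInf_setOf_le hks n
  · filter_upwards [hidx.eventually_ge_atTop 2] with n hn
    set j := sInf {i | n ≤ ks i}
    have hpos : 0 < ks (j - 1) := (Nat.zero_le _).trans_lt (hks (by omega : 0 < j - 1))
    have hlt : ks (j - 1) < n := apply_sInf_setOf_le_sub_one_lt (by omega)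
    show (ks j : ℝ) / n ≤ ks (j - 1 + 1) / ks (j - 1)
    rw [Nat.sub_add_cancel (by omega : 1 ≤ j)]
    gcongr

end SubsequenceCeiling

theorem cesaro_sub_subseq_cesaro_tendsto_zero_general
    (a : ℕ → ℝ) (ha0 : ∀ n, 0 ≤ a n) (hbd : ∃ K : ℝ, ∀ n, a n ≤ K)
    (ks : ℕ → ℕ) (hks : StrictMono ks)
    (hratio : Tendsto (fun i => (ks (i + 1) : ℝ) / ks i) atTop (nhds 1)) :
    Tendsto (fun n : ℕ =>
        ((n : ℝ) + 1)⁻¹ * ∑ k ∈ range (n + 1), a k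
      - ((ks (sInf {i | n ≤ ks i}) : ℝ) + 1)⁻¹ *
          ∑ k ∈ range (ks (sInf {i | n ≤ ks i}) + 1), a k)
      atTop (nhds 0) := by
  obtain ⟨K, hK⟩ := hbd
  have hK0 : 0 ≤ K := (ha0 0).trans (hK 0)
  have hbound :
      Tendsto (fun n : ℕ => K * ((ks (sInf {i | n ≤ ks i}) : ℝ) / n - 1)) atTop (𝓝 0) := by
    simpa using ((tendsto_apply_sInf_setOf_le_div_self hks hratio).sub_const 1).const_mul K
  refine squeeze_zero_norm' ?_ hbound
  filter_upwards [eventually_gt_atTop 0] with n hn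
  set M := ks (sInf {i | n ≤ ks i})
  have hnM : n ≤ M := le_apply_sInf_setOf_le hks n
  have hn' : (0 : ℝ) < n := by exact_mod_cast hn
  calc |cesaroMean a n - cesaroMean a M| ≤ K * (M - n) / (M + 1) :=
        abs_cesaroMean_sub_le ha0 hK hnM
    _ ≤ K * (M - n) / n := by
        gcongr
        · exact mul_nonneg hK0 (sub_nonneg.mpr (by exact_mod_cast hnM))
        · linarith [(Nat.cast_le (α := ℝ)).2 hnM]
    _ = K * (M / n - 1) := by field_simp

/-- Cesàro means along the full sequence and along a subsequence `k_i` with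
`k_{i+1}/k_i → 1` agree asymptotically, for a nonnegative bounded sequence. -/
theorem cesaro_sub_subseq_cesaro_tendsto_zero
    (a : ℕ → ℝ) (ha0 : ∀ n, 0 ≤ a n) (hbd : ∃ K : ℝ, ∀ n, a n ≤ K)
    (ks : ℕ → ℕ) (hks : StrictMono ks) (hkspos : 0 < ks 0)
    (hratio : Tendsto (fun i => (ks (i + 1) : ℝ) / ks i) atTop (nhds 1)) :
    Tendsto (fun n : ℕ =>
        ((n : ℝ) + 1)⁻¹ * ∑ k ∈ range (n + 1), a k
      - ((ks (sInf {i | n ≤ ks i}) : ℝ) + 1)⁻¹ *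
          ∑ k ∈ range (ks (sInf {i | n ≤ ks i}) + 1), a k)
      atTop (nhds 0) :=
  cesaro_sub_subseq_cesaro_tendsto_zero_general a ha0 hbd ks hks hratio
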